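/- The vector X₁ = (1, u, u²/2)ᵀ satisfies A_c^TV·X₁ = u·X₁, and for every real constant x₁ the vector X₂ = (x₁, 1 + u·x₁, u + (u²/2)·x₁)ᵀ satisfies A_c^TV·X₂ = u·X₂ + X₁; i.e., X₁ and X₂ form a Jordan chain of length two for A_c^TV at the eigenvalue u. -/
import Mathlib

/-- The Toro–Vázquez convection flux Jacobian of the 1-D Euler system. -/
noncomputable def AcTV (u : ℝ) : Matrix (Fin 3) (Fin 3) ℝ :=
  !![0, 1, 0;
     -u^2, 2*u, 0;
     -u^3, (3/2)*u^2, 0]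

/-- `X₁ = (1, u, u²/2)` is an eigenvector of `A_c^TV` for the eigenvalue `u`, and every
`X₂ = (x₁, 1 + u·x₁, u + (u²/2)·x₁)` satisfies `A_c^TV·X₂ = u·X₂ + X₁`, so `X₁, X₂`
form a Jordan chain of length two at the eigenvalue `u`. -/
theorem jordan_chain_AcTV (u : ℝ) :
    (AcTV u).mulVec ![1, u, u^2/2] = u • ![1, u, u^2/2] ∧
    ∀ x₁ : ℝ,
      (AcTV u).mulVec ![x₁, 1 + u*x₁, u + (u^2/2)*x₁] =
        u • ![x₁, 1 + u*x₁, u + (u^2/2)*x₁] + ![1, u, u^2/2] := by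
  constructor
  · funext i
    fin_cases i <;>
      simp [AcTV, Matrix.mulVec, dotProduct, Fin.sum_univ_succ] <;> ring
  · intro x₁
    funext i
    fin_cases i <;>
      simp [AcTV, Matrix.mulVec, dotProduct, Fin.sum_univ_succ] <;> ring
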